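/- arXiv:2003.00511 — 3 statements merged into one kernel-verified Lean document; each statement's English description precedes it below -/
import Mathlib

section
/- Let $\phi$ be a negation-free formula (built with $\to$ only) with no repeated variables, and let $p$ be a variable occurring in $\phi$ with $\phi \neq p$. Then there exists an assignment making $\phi$ true with $p$ true, and there exists an assignment making $\phi$ true with $p$ false. -/
/-- Well-formed formulae built from variables with negation and implication. -/
inductive Fml (V : Type) : Type
  | var : V → Fml V
  | neg : Fml V → Fml V
  | imp : Fml V → Fml V → Fml V

namespace Fml
variable {V : Type}

/-- Boolean evaluation under an assignment `v : V → Bool`. -/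
def eval (v : V → Bool) : Fml V → Bool
  | var p => v p
  | neg φ => !(eval v φ)
  | imp φ ψ => !(eval v φ) || eval v ψ

/-- The list of variable occurrences (leaves, left to right). -/
def varList : Fml V → List V
  | var p => [p]
  | neg φ => varList φ
  | imp φ ψ => varList φ ++ varList ψ

/-- A formula is negation-free if it contains no `¬`. -/
def NegFree : Fml V → Prop
  | var _ => True
  | neg _ => False
  | imp φ ψ => NegFree φ ∧ NegFree ψ

/-- The rightmost variable (rightmost leaf). -/
def rightmost : Fml V → V
  | var p => p
  | neg φ => rightmost φ
  | imp _ ψ => rightmost ψ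

/-- Whether a formula contains at least one `¬`. -/
def HasNeg : Fml V → Prop
  | var _ => False
  | neg _ => True
  | imp φ ψ => HasNeg φ ∨ HasNeg ψ

/-- Length of a formula. -/
def len : Fml V → ℕ
  | var _ => 1
  | neg φ => len φ + 1
  | imp φ ψ => len φ + len ψ + 1

/-- Number of occurrences of `¬`. -/
def negCount : Fml V → ℕ
  | var _ => 0
  | neg φ => negCount φ + 1
  | imp φ ψ => negCount φ + negCount ψ

end Fml

/-! A negation-free formula is true as soon as its rightmost variable is, since
`α → β` is true whenever `β` is. So any assignment that is true at the rightmost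
variable and false at `p` works, unless `p` is the rightmost variable itself. In that case
`φ = α → β` with `p` rightmost in `β`; as variables do not repeat, `p` does not occur in `α`,
and an assignment falsifying `α` (one exists, by the same observation applied along the
right spine) can be set false at `p`. -/

namespace Fml

variable {V : Type}

theorem rightmost_mem_varList (φ : Fml V) : φ.rightmost ∈ φ.varList := by
  induction φ with
  | var q => exact List.mem_singleton_self q
  | neg α ih => exact ih
  | imp α β _ ih => exact List.mem_append_right _ ih

theorem eval_congr {v w : V → Bool} {φ : Fml V} (h : ∀ x ∈ φ.varList, v x = w x) :
    φ.eval v = φ.eval w := by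
  induction φ with
  | var q => exact h q (List.mem_singleton_self q)
  | neg α ih => simp only [eval, ih h]
  | imp α β ihα ihβ =>
    simp only [eval, ihα fun x hx => h x (List.mem_append_left _ hx),
      ihβ fun x hx => h x (List.mem_append_right _ hx)]

theorem eval_update_of_not_mem [DecidableEq V] {φ : Fml V} {p : V} (hp : p ∉ φ.varList)
    (v : V → Bool) (b : Bool) : φ.eval (Function.update v p b) = φ.eval v :=
  eval_congr fun _ hx => Function.update_of_ne (ne_of_mem_of_not_mem hx hp) b v

theorem NegFree.eval_eq_true {φ : Fml V} (hnf : φ.NegFree) {v : V → Bool}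
    (hv : v φ.rightmost = true) : φ.eval v = true := by
  induction φ with
  | var q => exact hv
  | neg α _ => exact hnf.elim
  | imp α β _ ihβ => simp [eval, ihβ hnf.2 hv]

theorem NegFree.exists_eval_eq_false {φ : Fml V} (hnf : φ.NegFree) (hnd : φ.varList.Nodup) :
    ∃ v : V → Bool, φ.eval v = false := by
  classical
  induction φ with
  | var q => exact ⟨fun _ => false, rfl⟩
  | neg α _ => exact hnf.elim
  | imp α β _ ihβ =>
    rw [varList, List.nodup_append] at hnd
    obtain ⟨w, hw⟩ := ihβ hnf.2 hnd.2.1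
    have hr : α.rightmost ∉ β.varList := fun h => hnd.2.2 _ α.rightmost_mem_varList _ h rfl
    refine ⟨Function.update w α.rightmost true, ?_⟩
    have hα : α.eval (Function.update w α.rightmost true) = true :=
      hnf.1.eval_eq_true (Function.update_self _ _ _)
    simp [eval, hα, eval_update_of_not_mem hr, hw]

theorem NegFree.exists_eval_eq_true_and_apply_eq_false {φ : Fml V} (hnf : φ.NegFree)
    (hnd : φ.varList.Nodup) {p : V} (hne : φ ≠ var p) :
    ∃ v : V → Bool, φ.eval v = true ∧ v p = false := by
  classical
  by_cases hr : p = φ.rightmost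
  · match φ, hnf, hnd with
    | var q, _, _ => exact absurd (congrArg var hr).symm hne
    | imp α β, hnf, hnd =>
      rw [varList, List.nodup_append] at hnd
      have hpα : p ∉ α.varList := fun h =>
        hnd.2.2 p h p (hr ▸ β.rightmost_mem_varList) rfl
      obtain ⟨w, hw⟩ := hnf.1.exists_eval_eq_false hnd.1
      refine ⟨Function.update w p false, ?_, Function.update_self _ _ _⟩
      simp [eval, eval_update_of_not_mem hpα, hw]
  · exact ⟨Function.update (fun _ => true) p false,
      hnf.eval_eq_true (by simp [Function.update_of_ne (Ne.symm hr)]), Function.update_self _ _ _⟩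

end Fml

theorem negFree_noRepeat_true_with_p_general {V : Type} (φ : Fml V) (p : V)
    (hnf : Fml.NegFree φ) (hnd : (Fml.varList φ).Nodup)
    (hne : φ ≠ Fml.var p) :
    (∃ v : V → Bool, Fml.eval v φ = true ∧ v p = true) ∧
    (∃ v : V → Bool, Fml.eval v φ = true ∧ v p = false) :=
  ⟨⟨fun _ => true, hnf.eval_eq_true rfl, rfl⟩,
    hnf.exists_eval_eq_true_and_apply_eq_false hnd hne⟩

theorem negFree_noRepeat_true_with_p {V : Type} (φ : Fml V) (p : V)
    (hnf : Fml.NegFree φ) (hnd : (Fml.varList φ).Nodup)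
    (hp : p ∈ Fml.varList φ) (hne : φ ≠ Fml.var p) :
    (∃ v : V → Bool, Fml.eval v φ = true ∧ v p = true) ∧
    (∃ v : V → Bool, Fml.eval v φ = true ∧ v p = false) :=
  negFree_noRepeat_true_with_p_general φ p hnf hnd hne
end

section
/- Let $\phi$ be a negation-free formula (built with $\to$ only) with no repeated variables, and let $p$ be a variable of $\phi$ that is not the rightmost variable of $\phi$. Then there exists an assignment making $\phi$ false in which $p$ is assigned true. -/
/-!
Make the rightmost variable false and every other variable true. A negation-free formula whose
rightmost variable is true is true, since it has the shape `… → r`. Without repetitions, the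
rightmost variable of a formula `φ → ψ` occurs only in `ψ`, so the antecedent `φ` is true and, by
induction, the consequent `ψ` is false.
-/

namespace Fml

variable {V : Type}

theorem eval_eq_true_of_rightmost {v : V → Bool} {φ : Fml V} (hnf : φ.NegFree)
    (hr : v φ.rightmost = true) : φ.eval v = true := by
  induction φ with
  | var p => simpa [eval, rightmost] using hr
  | neg φ _ => exact hnf.elim
  | imp φ ψ _ ihψ => simp [eval, ihψ hnf.2 hr]

theorem eval_eq_false_of_rightmost {v : V → Bool} {φ : Fml V} (hnf : φ.NegFree)
    (hnd : φ.varList.Nodup) (hr : v φ.rightmost = false)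
    (htrue : ∀ q ∈ φ.varList, q ≠ φ.rightmost → v q = true) : φ.eval v = false := by
  induction φ with
  | var p => simpa [eval, rightmost] using hr
  | neg φ _ => exact hnf.elim
  | imp φ ψ _ ihψ =>
    rw [varList, List.nodup_append] at hnd
    have hφ : φ.eval v = true := by
      refine eval_eq_true_of_rightmost hnf.1 (htrue _ (by simp [varList, rightmost_mem_varList]) ?_)
      exact hnd.2.2 _ (rightmost_mem_varList φ) _ (rightmost_mem_varList ψ)
    have hψ : ψ.eval v = false :=
      ihψ hnf.2 hnd.2.1 hr fun q hq => htrue q (by simp [varList, hq])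
    simp [eval, hφ, hψ]

end Fml

theorem negFree_noRepeat_false_with_p_true_general {V : Type} (φ : Fml V) (p : V)
    (hnf : Fml.NegFree φ) (hnd : (Fml.varList φ).Nodup)
    (hne : p ≠ Fml.rightmost φ) :
    ∃ v : V → Bool, Fml.eval v φ = false ∧ v p = true := by
  classical
  refine ⟨fun q => decide (q ≠ φ.rightmost), ?_, by simpa using hne⟩
  exact Fml.eval_eq_false_of_rightmost hnf hnd (by simp) fun q _ hq => by simpa using hq

theorem negFree_noRepeat_false_with_p_true {V : Type} (φ : Fml V) (p : V)
    (hnf : Fml.NegFree φ) (hnd : (Fml.varList φ).Nodup)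
    (hp : p ∈ Fml.varList φ) (hne : p ≠ Fml.rightmost φ) :
    ∃ v : V → Bool, Fml.eval v φ = false ∧ v p = true :=
  negFree_noRepeat_false_with_p_true_general φ p hnf hnd hne
end

section
/- Suppose $\phi$ is a tautology in the logic with $\neg$ and $\to$, containing no negations, with exactly one variable $p$ occurring exactly twice and all other variables occurring once. Then $\phi$ has the form $\psi_1 \to (\psi_2 \to (\cdots \to (\psi_k \to (p \to \eta))\cdots))$ (possibly with $k = 0$) where $\eta$ is negation-free, the rightmost variable of $\eta$ is $p$, and $\psi_1, \dots, \psi_k, \eta$ are negation-free formulae with no repeated variables and pairwise disjoint variable sets (apart from the prescribed two occurrences of $p$). -/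
/-! A negation-free formula `ψ₁ → ⋯ → ψₙ → r` is false exactly when its rightmost variable `r`
is false and every `ψᵢ` is true. Splitting `φ = a → b`, if `p ∉ a` then `a` and `b` share no
variable, `a` can be made true independently of `b`, so `b` is again a tautology and we recurse.
Otherwise `a` and `b` share only `p`. If `p ∉ b`, then `b` has no repeated variable, so it is
refutable independently of `a`, which is impossible. If `p` lies in both, refuting `b` through its
rightmost variable forces `a` to have the same rightmost variable, which must be `p`; and if
`a = c → d` were not just `p`, refuting `c` and `b` together would refute `φ`. Once
`φ = ψ₁ → ⋯ → ψₖ → p → η` is found, the remaining claims are counting: after deleting the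
displayed `p`, no variable is repeated. -/

namespace List
variable {α : Type*} [DecidableEq α] {p : α}

theorem eq_of_mem_of_mem_of_count_append_le_one {l₁ l₂ : List α}
    (h : ∀ q ≠ p, (l₁ ++ l₂).count q ≤ 1) {q : α} (h₁ : q ∈ l₁) (h₂ : q ∈ l₂) : q = p := by
  by_contra hq
  have := h q hq
  rw [count_append] at this
  have := count_pos_iff.2 h₁
  have := count_pos_iff.2 h₂
  omega

theorem nodup_of_count_le_one_of_ne {l : List α} (h : ∀ q ≠ p, l.count q ≤ 1)
    (hp : l.count p ≤ 1) : l.Nodup :=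
  nodup_iff_count_le_one.2 fun q => if hq : q = p then hq ▸ hp else h q hq

theorem nodup_append_of_count_append_cons {l₁ l₂ : List α} (hp : (l₁ ++ p :: l₂).count p = 2)
    (h : ∀ q ≠ p, (l₁ ++ p :: l₂).count q ≤ 1) : (l₁ ++ l₂).Nodup := by
  refine nodup_of_count_le_one_of_ne (p := p) (fun q hq => ?_) ?_
  · simpa [count_append, count_cons, Ne.symm hq] using h q hq
  · simp only [count_append, count_cons, beq_self_eq_true, if_true] at hp
    simp only [count_append]
    omega

end List

namespace Fml
variable {V : Type}

theorem eval_congr_s17 {v w : V → Bool} (ψ : Fml V) (h : ∀ q ∈ ψ.varList, v q = w q) :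
    eval v ψ = eval w ψ := by
  induction ψ with
  | var q => exact h q (by simp [varList])
  | neg ψ ih => simp only [eval, ih h]
  | imp a b iha ihb =>
    simp only [varList, List.mem_append] at h
    simp only [eval, iha fun q hq => h q (.inl hq), ihb fun q hq => h q (.inr hq)]

theorem rightmost_mem (ψ : Fml V) : ψ.rightmost ∈ ψ.varList := by
  induction ψ with
  | var q => simp [rightmost, varList]
  | neg ψ ih => exact ih
  | imp a b _ ihb => exact List.mem_append_right _ ihb

theorem NegFree.eval_eq_true_of_rightmost {v : V → Bool} {ψ : Fml V} (hψ : NegFree ψ)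
    (hv : v ψ.rightmost = true) : eval v ψ = true := by
  induction ψ with
  | var q => exact hv
  | neg _ _ => exact hψ.elim
  | imp a b _ ihb => simp [eval, ihb hψ.2 hv]

theorem varList_foldr_imp (l : List (Fml V)) (c : Fml V) :
    (l.foldr imp c).varList = (l.map varList).flatten ++ c.varList := by
  induction l with
  | nil => simp
  | cons a l ih => simp [varList, ih]

theorem negFree_foldr_imp {l : List (Fml V)} {c : Fml V} :
    NegFree (l.foldr imp c) ↔ (∀ ψ ∈ l, NegFree ψ) ∧ NegFree c := by
  induction l with
  | nil => simp
  | cons a l ih => simp [NegFree, ih, and_assoc]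

section DecidableEq
variable [DecidableEq V]

theorem exists_eval_eq_of_disjoint {a b : Fml V} (h : a.varList.Disjoint b.varList)
    (u v : V → Bool) : ∃ w, eval w a = eval u a ∧ eval w b = eval v b :=
  ⟨fun q => if q ∈ a.varList then u q else v q,
    eval_congr_s17 a fun _ hq => if_pos hq,
    eval_congr_s17 b fun _ hq => if_neg fun hqa => h hqa hq⟩

theorem NegFree.eval_rightmost_ne_eq_false {ψ : Fml V} (hψ : NegFree ψ)
    (h : ψ.varList.count ψ.rightmost = 1) : eval (fun q => q ≠ ψ.rightmost) ψ = false := by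
  induction ψ with
  | var q => simp [eval, rightmost]
  | neg _ _ => exact hψ.elim
  | imp a b _ ihb =>
    simp only [varList, rightmost, List.count_append] at h
    change eval (fun q => q ≠ b.rightmost) (imp a b) = false
    have hb : b.varList.count b.rightmost = 1 := by
      have := List.count_pos_iff.2 (rightmost_mem b)
      omega
    have hne : a.rightmost ≠ b.rightmost := fun heq => by
      have := List.count_pos_iff.2 (heq ▸ rightmost_mem a)
      omega
    rw [eval, hψ.1.eval_eq_true_of_rightmost (v := fun q => q ≠ b.rightmost) (by simpa using hne),
      ihb hψ.2 hb]
    rfl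

theorem NegFree.exists_eval_eq_false_s17 {ψ : Fml V} (hψ : NegFree ψ) (h : ψ.varList.Nodup) :
    ∃ v, eval v ψ = false :=
  ⟨_, hψ.eval_rightmost_ne_eq_false (List.count_eq_one_of_mem h (rightmost_mem ψ))⟩

theorem rightmost_eq_of_tautology_imp {a b : Fml V} (ha : NegFree a) (hb : NegFree b)
    (hcount : b.varList.count b.rightmost = 1) (htaut : ∀ v, eval v (imp a b) = true) :
    a.rightmost = b.rightmost := by
  by_contra hne
  have hva := ha.eval_eq_true_of_rightmost (v := fun q => q ≠ b.rightmost) (by simpa using hne)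
  have := htaut fun q => q ≠ b.rightmost
  rw [eval, hva, hb.eval_rightmost_ne_eq_false hcount] at this
  exact Bool.false_ne_true this

theorem tautology_right_of_disjoint {a b : Fml V} (ha : NegFree a)
    (hab : a.varList.Disjoint b.varList) (htaut : ∀ v, eval v (imp a b) = true) :
    ∀ v, eval v b = true := by
  intro v
  obtain ⟨w, hwa, hwb⟩ := exists_eval_eq_of_disjoint hab (fun _ => true) v
  have := htaut w
  rwa [eval, hwa, ha.eval_eq_true_of_rightmost rfl, hwb] at this

theorem eq_var_and_rightmost_eq_of_tautology_imp {p : V} {a b : Fml V} (ha : NegFree a)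
    (hb : NegFree b) (ha' : a.varList.Nodup) (hb' : b.varList.Nodup)
    (hcommon : ∀ q ∈ a.varList, q ∈ b.varList → q = p) (htaut : ∀ v, eval v (imp a b) = true) :
    a = var p ∧ b.rightmost = p := by
  have hr := rightmost_eq_of_tautology_imp ha hb
    (List.count_eq_one_of_mem hb' (rightmost_mem b)) htaut
  have hrb : b.rightmost = p := hcommon _ (hr ▸ rightmost_mem a) (rightmost_mem b)
  refine ⟨?_, hrb⟩
  cases a with
  | var q => exact congrArg var (hr.trans hrb)
  | neg _ => exact ha.elim
  | imp c d =>
    exfalso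
    simp only [varList, List.nodup_append] at ha' hcommon
    have hcb : c.varList.Disjoint b.varList := fun q hqc hqb => by
      have hpd : p ∈ d.varList := hr.trans hrb ▸ rightmost_mem d
      exact ha'.2.2 q hqc p hpd (hcommon q (List.mem_append_left _ hqc) hqb)
    obtain ⟨u, hu⟩ := ha.1.exists_eval_eq_false_s17 ha'.1
    obtain ⟨v, hv⟩ := hb.exists_eval_eq_false_s17 hb'
    obtain ⟨w, hwc, hwb⟩ := exists_eval_eq_of_disjoint hcb u v
    simpa [eval, hwc, hu, hwb, hv] using htaut w

theorem exists_eq_foldr_imp_var_imp_of_tautology {p : V} {φ : Fml V} (hnf : NegFree φ)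
    (htaut : ∀ v, eval v φ = true) (hp : φ.varList.count p = 2)
    (hrep : ∀ q ≠ p, φ.varList.count q ≤ 1) :
    ∃ (l : List (Fml V)) (η : Fml V), φ = l.foldr imp (imp (var p) η) ∧ η.rightmost = p := by
  induction φ with
  | var q =>
    simp only [varList, List.count_singleton] at hp
    split at hp <;> omega
  | neg _ _ => exact hnf.elim
  | imp a b _ ihb =>
    have hcommon : ∀ q ∈ a.varList, q ∈ b.varList → q = p :=
      fun _ => List.eq_of_mem_of_mem_of_count_append_le_one hrep
    simp only [varList, List.count_append] at hp hrep
    have hdisj (h : p ∉ a.varList ∨ p ∉ b.varList) : a.varList.Disjoint b.varList :=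
      fun q hqa hqb => by obtain rfl := hcommon q hqa hqb; tauto
    have hnda (h : a.varList.count p ≤ 1) : a.varList.Nodup :=
      List.nodup_of_count_le_one_of_ne (fun q hq => by have := hrep q hq; omega) h
    have hndb (h : b.varList.count p ≤ 1) : b.varList.Nodup :=
      List.nodup_of_count_le_one_of_ne (fun q hq => by have := hrep q hq; omega) h
    by_cases hpa : p ∈ a.varList
    · have hpa' := List.count_pos_iff.2 hpa
      by_cases hpb : p ∈ b.varList
      · have hpb' := List.count_pos_iff.2 hpb
        obtain ⟨rfl, hrb⟩ := eq_var_and_rightmost_eq_of_tautology_imp hnf.1 hnf.2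
          (hnda (by omega)) (hndb (by omega)) hcommon htaut
        exact ⟨[], b, rfl, hrb⟩
      · obtain ⟨v, hv⟩ := hnf.2.exists_eval_eq_false_s17
          (hndb (by simp [List.count_eq_zero.2 hpb]))
        simp [tautology_right_of_disjoint hnf.1 (hdisj (.inr hpb)) htaut v] at hv
    · have hpa' := List.count_eq_zero.2 hpa
      obtain ⟨l, η, rfl, hη⟩ := ihb hnf.2
        (tautology_right_of_disjoint hnf.1 (hdisj (.inl hpa)) htaut) (by omega)
        fun q hq => by have := hrep q hq; omega
      exact ⟨a :: l, η, rfl, hη⟩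

end DecidableEq

end Fml

open Fml in
theorem tautology_minimal_structure {V : Type} [DecidableEq V] (φ : Fml V) (p : V)
    (htaut : ∀ v : V → Bool, Fml.eval v φ = true)
    (hnf : Fml.NegFree φ)
    (hp2 : (Fml.varList φ).count p = 2)
    (hothers : ∀ q ∈ Fml.varList φ, q ≠ p → (Fml.varList φ).count q = 1) :
    ∃ (l : List (Fml V)) (η : Fml V),
      φ = l.foldr Fml.imp (Fml.imp (Fml.var p) η) ∧
      Fml.NegFree η ∧ (Fml.varList η).Nodup ∧ Fml.rightmost η = p ∧
      (∀ ψ ∈ l, Fml.NegFree ψ ∧ (Fml.varList ψ).Nodup ∧ p ∉ Fml.varList ψ) ∧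
      List.Pairwise (fun l₁ l₂ => l₁.Disjoint l₂) (l.map Fml.varList ++ [Fml.varList η]) := by
  have hrep : ∀ q ≠ p, φ.varList.count q ≤ 1 := fun q hq => by
    by_cases hqφ : q ∈ φ.varList
    · exact (hothers q hqφ hq).le
    · simp [List.count_eq_zero.2 hqφ]
  obtain ⟨l, η, rfl, hη⟩ := exists_eq_foldr_imp_var_imp_of_tautology hnf htaut hp2 hrep
  obtain ⟨hl, -, hηnf⟩ := negFree_foldr_imp.1 hnf
  have hvars : (l.foldr imp (imp (var p) η)).varList = (l.map varList).flatten ++ p :: η.varList :=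
    by simp [varList_foldr_imp, varList]
  rw [hvars] at hp2 hrep
  have hnodup : (l.map varList ++ [η.varList]).flatten.Nodup := by
    simpa using List.nodup_append_of_count_append_cons hp2 hrep
  obtain ⟨hnd, hpw⟩ := List.nodup_flatten.1 hnodup
  refine ⟨l, η, rfl, hηnf, hnd _ (by simp), hη, fun ψ hψ => ⟨hl ψ hψ, ?_, fun hpψ => ?_⟩, hpw⟩
  · exact hnd _ (List.mem_append_left _ (List.mem_map_of_mem hψ))
  · exact (List.pairwise_append.1 hpw).2.2 _ (List.mem_map_of_mem hψ) _
      (List.mem_singleton_self _) hpψ (hη ▸ rightmost_mem η)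
end
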